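/- arXiv:2202.01515 — 2 statements merged into one kernel-verified Lean document; each statement's English description precedes it below -/
import Mathlib

section
/- Let Σ^h be an n×n Hermitian PSD matrix, X ∈ ℂ^{n×t}, Ψ ∈ ℂ^{t×q}. Define Σ_y = Ψ^H X^H Σ^h X Ψ + Ψ^H Ψ + I. Then the analog-feedback MSE D = Tr(Σ^h − Σ^h X Ψ Σ_y^{-1} Ψ^H X^H Σ^h) satisfies D = Tr(Λ(I + G)^{-1}), where Σ^h = UΛU^H is the reduced eigendecomposition (U ∈ ℂ^{n×r} orthonormal columns, Λ diagonal positive) and G = Λ^{1/2} U^H X Ψ(Ψ^HΨ + I)^{-1}Ψ^H X^H U Λ^{1/2}. -/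
/-!
Put `B = Λ^{1/2} Uᴴ X Ψ` and `M = ΨᴴΨ + I`. Then `Σ_y = M + BᴴB`, `G = B M⁻¹ Bᴴ`, and the
error matrix `Σ − Σ X Ψ Σ_y⁻¹ Ψᴴ Xᴴ Σ` equals `U Λ^{1/2} (I − B Σ_y⁻¹ Bᴴ) Λ^{1/2} Uᴴ`.
The Woodbury identity turns the middle factor into `(I + G)⁻¹`, and `UᴴU = I` together with
cyclicity of the trace removes `U` and recombines the two square roots into `Λ`.
-/

open Matrix
open scoped ComplexOrder

namespace Matrix

variable {m n R : Type*} [Fintype m] [Fintype n]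

theorem trace_mul_mul_of_mul_eq_one [DecidableEq n] [CommSemiring R] {U : Matrix m n R}
    {V : Matrix n m R} (hVU : V * U = 1) (A : Matrix n n R) : trace (U * A * V) = trace A := by
  rw [trace_mul_comm, ← Matrix.mul_assoc, hVU, Matrix.one_mul]

theorem one_add_mul_inv_mul_inv_eq_sub [DecidableEq m] [DecidableEq n] [CommRing R]
    (B : Matrix m n R) (C : Matrix n m R) {M : Matrix n n R} (hM : IsUnit M)
    (hMCB : IsUnit (M + C * B)) :
    (1 + B * M⁻¹ * C)⁻¹ = 1 - B * (M + C * B)⁻¹ * C := by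
  have hMM : M⁻¹⁻¹ = M := nonsing_inv_nonsing_inv M ((isUnit_iff_isUnit_det M).mp hM)
  have := add_mul_mul_inv_eq_sub 1 B M⁻¹ C isUnit_one (isUnit_nonsing_inv_iff.mpr hM)
    (by rwa [hMM, inv_one, Matrix.mul_one])
  simpa [hMM] using this

end Matrix

theorem analog_feedback_mse_reduction_general (n t q r : ℕ)
    (Sig : Matrix (Fin n) (Fin n) ℂ)
    (X : Matrix (Fin n) (Fin t) ℂ) (Ψ : Matrix (Fin t) (Fin q) ℂ)
    (U : Matrix (Fin n) (Fin r) ℂ) (hU : Uᴴ * U = 1)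
    (lam : Fin r → ℝ) (hlam : ∀ i, 0 < lam i)
    (hdecomp : Sig = U * Matrix.diagonal (fun i => (lam i : ℂ)) * Uᴴ) :
    let Sy : Matrix (Fin q) (Fin q) ℂ := Ψᴴ * Xᴴ * Sig * X * Ψ + Ψᴴ * Ψ + 1
    let L12 : Matrix (Fin r) (Fin r) ℂ := Matrix.diagonal (fun i => (Real.sqrt (lam i) : ℂ))
    let G : Matrix (Fin r) (Fin r) ℂ :=
      L12 * Uᴴ * X * Ψ * (Ψᴴ * Ψ + 1)⁻¹ * Ψᴴ * Xᴴ * U * L12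
    let Λ : Matrix (Fin r) (Fin r) ℂ := Matrix.diagonal (fun i => (lam i : ℂ))
    (Sig - Sig * X * Ψ * Sy⁻¹ * Ψᴴ * Xᴴ * Sig).trace = (Λ * (1 + G)⁻¹).trace := by
  intro Sy L12 G Λ
  have hL : L12ᴴ = L12 := by simp [L12, diagonal_conjTranspose]
  have hLL : L12 * L12 = Λ := by
    simp only [L12, Λ, diagonal_mul_diagonal, ← Complex.ofReal_mul,
      Real.mul_self_sqrt (hlam _).le]
  have hSig : Sig = U * (L12 * L12) * Uᴴ := by rw [hLL]; exact hdecomp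
  set B := L12 * Uᴴ * X * Ψ
  set M := Ψᴴ * Ψ + 1
  have hM : M.PosDef := PosDef.posSemidef_add (posSemidef_conjTranspose_mul_self Ψ) PosDef.one
  have hSy : Sy = M + Bᴴ * B := by
    simp only [Sy, B, hSig, conjTranspose_mul, conjTranspose_conjTranspose, hL, Matrix.mul_assoc]
    rw [add_assoc]
    exact add_comm _ _
  have hG : G = B * M⁻¹ * Bᴴ := by
    simp only [G, B, M, conjTranspose_mul, conjTranspose_conjTranspose, hL, Matrix.mul_assoc]
  have hD : Sig - Sig * X * Ψ * Sy⁻¹ * Ψᴴ * Xᴴ * Sig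
      = U * (L12 * (1 - B * Sy⁻¹ * Bᴴ) * L12) * Uᴴ := by
    simp only [hSig, B, conjTranspose_mul, conjTranspose_conjTranspose, hL,
      Matrix.mul_sub, Matrix.sub_mul, Matrix.mul_one, Matrix.mul_assoc]
  have hSyPD : (M + Bᴴ * B).PosDef := hM.add_posSemidef (posSemidef_conjTranspose_mul_self B)
  rw [hD, trace_mul_mul_of_mul_eq_one hU, hSy,
    ← one_add_mul_inv_mul_inv_eq_sub B Bᴴ hM.isUnit hSyPD.isUnit, ← hG, trace_mul_cycle, hLL]

/-- The analog-feedback MSE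
`D = Tr(Σ − Σ X Ψ Σ_y⁻¹ Ψᴴ Xᴴ Σ)` with `Σ_y = Ψᴴ Xᴴ Σ X Ψ + ΨᴴΨ + I` equals
`Tr(Λ(I+G)⁻¹)` where `Σ = UΛUᴴ` (reduced eigendecomposition) and
`G = Λ^{1/2} Uᴴ X Ψ(ΨᴴΨ + I)⁻¹Ψᴴ Xᴴ U Λ^{1/2}`. -/
theorem analog_feedback_mse_reduction (n t q r : ℕ)
    (Sig : Matrix (Fin n) (Fin n) ℂ) (hSig : Sig.PosSemidef)
    (X : Matrix (Fin n) (Fin t) ℂ) (Ψ : Matrix (Fin t) (Fin q) ℂ)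
    (U : Matrix (Fin n) (Fin r) ℂ) (hU : Uᴴ * U = 1)
    (lam : Fin r → ℝ) (hlam : ∀ i, 0 < lam i)
    (hdecomp : Sig = U * Matrix.diagonal (fun i => (lam i : ℂ)) * Uᴴ) :
    let Sy : Matrix (Fin q) (Fin q) ℂ := Ψᴴ * Xᴴ * Sig * X * Ψ + Ψᴴ * Ψ + 1
    let L12 : Matrix (Fin r) (Fin r) ℂ := Matrix.diagonal (fun i => (Real.sqrt (lam i) : ℂ))
    let G : Matrix (Fin r) (Fin r) ℂ :=
      L12 * Uᴴ * X * Ψ * (Ψᴴ * Ψ + 1)⁻¹ * Ψᴴ * Xᴴ * U * L12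
    let Λ : Matrix (Fin r) (Fin r) ℂ := Matrix.diagonal (fun i => (lam i : ℂ))
    (Sig - Sig * X * Ψ * Sy⁻¹ * Ψᴴ * Xᴴ * Sig).trace = (Λ * (1 + G)⁻¹).trace :=
  analog_feedback_mse_reduction_general n t q r Sig X Ψ U hU lam hlam hdecomp
end

section
/- Let Λ be r×r diagonal with positive entries, U ∈ ℂ^{n×r} with orthonormal columns, X ∈ ℂ^{n×t}, and P ∈ ℂ^{t×t} Hermitian PSD with rank(P) = p. If min(t, p) < r, then G = Λ^{1/2} U^H X P X^H U Λ^{1/2} has rank < r, and hence Tr(Λ(I+G)^{-1}) ≥ λ_min > 0 where λ_min is the smallest diagonal entry of Λ. -/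
open Matrix
open scoped ComplexOrder

/-- Diagonal entries of a PSD complex matrix have nonnegative real part. -/
lemma aux_diag_re_nonneg {m : Type*} [Fintype m] [DecidableEq m] {B : Matrix m m ℂ}
    (hB : B.PosSemidef) (i : m) : 0 ≤ (B i i).re := by
  have h := hB.dotProduct_mulVec_nonneg (Pi.single i 1)
  have he : star (Pi.single i 1) ⬝ᵥ (B *ᵥ Pi.single i 1) = B i i := by
    simp [dotProduct, Matrix.mulVec, Pi.single_apply, Finset.mul_sum]
  rw [he] at h
  exact (Complex.le_def.mp h).1

/-- If `min(t, p) < r` where `p = rank(P)`, then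
`G = Λ^{1/2} Uᴴ X P Xᴴ U Λ^{1/2}` has rank `< r` and
`Tr(Λ(I+G)⁻¹) ≥ λ_min > 0`. -/
theorem analog_feedback_error_floor (n t r p : ℕ) [NeZero r]
    (lam : Fin r → ℝ) (hlam : ∀ i, 0 < lam i)
    (U : Matrix (Fin n) (Fin r) ℂ) (hU : Uᴴ * U = 1)
    (X : Matrix (Fin n) (Fin t) ℂ)
    (P : Matrix (Fin t) (Fin t) ℂ) (hP : P.PosSemidef) (hPrank : P.rank = p)
    (hlt : min t p < r) :
    let L12 : Matrix (Fin r) (Fin r) ℂ := Matrix.diagonal (fun i => (Real.sqrt (lam i) : ℂ))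
    let G : Matrix (Fin r) (Fin r) ℂ := L12 * Uᴴ * X * P * Xᴴ * U * L12
    let Λ : Matrix (Fin r) (Fin r) ℂ := Matrix.diagonal (fun i => (lam i : ℂ))
    G.rank < r ∧
      Finset.univ.inf' Finset.univ_nonempty lam ≤ (Λ * (1 + G)⁻¹).trace.re ∧
      0 < Finset.univ.inf' Finset.univ_nonempty lam := by
  intro L12 G Λ
  set A : Matrix (Fin r) (Fin t) ℂ := L12 * Uᴴ * X with hA
  have hL12H : L12ᴴ = L12 := by
    ext i j
    simp only [L12, Matrix.conjTranspose_apply, Matrix.diagonal_apply, apply_ite]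
    rw [Complex.star_def]
    rcases eq_or_ne i j with h | h <;> simp [h, Complex.conj_ofReal, eq_comm]
  have hGeq : G = A * P * Aᴴ := by
    simp only [hA, Matrix.conjTranspose_mul, Matrix.conjTranspose_conjTranspose, hL12H, G]
    simp only [Matrix.mul_assoc]
  have hGpsd : G.PosSemidef := hGeq ▸ hP.mul_mul_conjTranspose_same A
  -- rank bound
  have hrank : G.rank < r := by
    rcases min_cases t p with ⟨hm, _⟩ | ⟨hm, _⟩
    · calc G.rank ≤ A.rank := by
            rw [hGeq, Matrix.mul_assoc]; exact Matrix.rank_mul_le_left A (P * Aᴴ)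
        _ ≤ t := by simpa using A.rank_le_card_width
        _ < r := by rwa [hm] at hlt
    · calc G.rank ≤ (A * P).rank := by rw [hGeq]; exact Matrix.rank_mul_le_left (A * P) Aᴴ
        _ ≤ P.rank := Matrix.rank_mul_le_right A P
        _ < r := by rw [hPrank]; rwa [hm] at hlt
  refine ⟨hrank, ?_, ?_⟩
  swap
  · rw [Finset.lt_inf'_iff]
    exact fun i _ => hlam i
  -- main trace bound
  have hH : G.IsHermitian := hGpsd.isHermitian
  set V : Matrix (Fin r) (Fin r) ℂ := (hH.eigenvectorUnitary : Matrix (Fin r) (Fin r) ℂ) with hV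
  have hVV : V * star V = 1 := (Matrix.mem_unitaryGroup_iff).mp hH.eigenvectorUnitary.2
  have hVV' : star V * V = 1 := (Matrix.mem_unitaryGroup_iff').mp hH.eigenvectorUnitary.2
  set eig : Fin r → ℝ := hH.eigenvalues with heig
  have heignn : ∀ i, 0 ≤ eig i := fun i => hGpsd.eigenvalues_nonneg i
  set d : Fin r → ℝ := fun i => 1 + eig i with hd
  have hdpos : ∀ i, 0 < d i := fun i => by have := heignn i; simp [hd]; linarith
  have hdne : ∀ i, ((d i : ℂ)) ≠ 0 := fun i => by
    exact_mod_cast Complex.ofReal_ne_zero.mpr (ne_of_gt (hdpos i))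
  -- spectral decomposition of 1 + G
  have h1Geq : 1 + G = V * Matrix.diagonal (fun i => (d i : ℂ)) * star V := by
    have hspec := hH.spectral_theorem
    have h1 : (1 : Matrix (Fin r) (Fin r) ℂ) = V * 1 * star V := by
      rw [Matrix.mul_one, hVV]
    calc 1 + G = V * 1 * star V +
          V * Matrix.diagonal (RCLike.ofReal ∘ eig) * star V := by rw [← h1, hspec, Unitary.conjStarAlgAut_apply]
      _ = V * (1 + Matrix.diagonal (RCLike.ofReal ∘ eig)) * star V := by noncomm_ring
      _ = V * Matrix.diagonal (fun i => (d i : ℂ)) * star V := by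
          congr 1
          congr 1
          rw [← Matrix.diagonal_one, Matrix.diagonal_add]
          congr 1
          funext i
          simp [hd]
  -- the inverse
  have hinv : (1 + G)⁻¹ = V * Matrix.diagonal (fun i => ((d i)⁻¹ : ℂ)) * star V := by
    apply Matrix.inv_eq_right_inv
    rw [h1Geq]
    calc V * Matrix.diagonal (fun i => (d i : ℂ)) * star V *
          (V * Matrix.diagonal (fun i => ((d i)⁻¹ : ℂ)) * star V)
        = V * (Matrix.diagonal (fun i => (d i : ℂ)) * (star V * V) *
            Matrix.diagonal (fun i => ((d i)⁻¹ : ℂ))) * star V := by noncomm_ring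
      _ = 1 := by
          rw [hVV', Matrix.mul_one, Matrix.diagonal_mul_diagonal]
          have : (fun i => (d i : ℂ) * ((d i)⁻¹ : ℂ)) = fun _ => (1 : ℂ) := by
            funext i
            push_cast
            exact mul_inv_cancel₀ (hdne i)
          rw [this, Matrix.diagonal_one, Matrix.mul_one, hVV]
  set B : Matrix (Fin r) (Fin r) ℂ := (1 + G)⁻¹ with hB
  -- trace of B
  have htrB : B.trace = ∑ i, ((d i)⁻¹ : ℂ) := by
    rw [hinv, Matrix.trace_mul_comm, ← Matrix.mul_assoc, hVV', Matrix.one_mul,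
      Matrix.trace_diagonal]
  -- B is PSD
  have hBpsd : B.PosSemidef := by
    have h1G : (1 + G).PosDef := Matrix.PosDef.add_posSemidef Matrix.PosDef.one hGpsd
    exact (Matrix.posDef_inv_iff.mpr h1G).posSemidef
  have hdiag : ∀ i, 0 ≤ (B i i).re := fun i => aux_diag_re_nonneg hBpsd i
  -- some eigenvalue is zero
  have hzero : ∃ i, eig i = 0 := by
    by_contra hc
    push_neg at hc
    have hcard : Fintype.card {i // eig i ≠ 0} = r := by
      rw [Fintype.card_congr (Equiv.subtypeUnivEquiv hc), Fintype.card_fin]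
    have := hH.rank_eq_card_non_zero_eigs
    rw [hcard] at this
    omega
  obtain ⟨i0, hi0⟩ := hzero
  -- trace B real part ≥ 1
  have htrBre : (1 : ℝ) ≤ B.trace.re := by
    rw [htrB]
    have : ((∑ i, ((d i)⁻¹ : ℂ))).re = ∑ i, (d i)⁻¹ := by
      push_cast
      simp
    rw [this]
    have h0 : (d i0)⁻¹ = 1 := by simp [hd, hi0]
    calc (1 : ℝ) = (d i0)⁻¹ := h0.symm
      _ ≤ ∑ i, (d i)⁻¹ := Finset.single_le_sum
          (fun i _ => inv_nonneg.mpr (le_of_lt (hdpos i))) (Finset.mem_univ i0)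
  -- diagonal entries of Λ * B
  have hΛB : (Λ * B).trace = ∑ i, (lam i : ℂ) * B i i := by
    simp [Matrix.trace, Matrix.diag, Λ, Matrix.diagonal_mul]
  set lmin : ℝ := Finset.univ.inf' Finset.univ_nonempty lam with hlmin
  have hlmin_le : ∀ i, lmin ≤ lam i := fun i => Finset.inf'_le lam (Finset.mem_univ i)
  have hlmin_pos : 0 < lmin := by
    rw [hlmin, Finset.lt_inf'_iff]
    exact fun i _ => hlam i
  have htrBre_sum : B.trace.re = ∑ i, (B i i).re := by
    simp [Matrix.trace, Matrix.diag]
  calc lmin = lmin * 1 := by ring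
    _ ≤ lmin * B.trace.re := by
        exact mul_le_mul_of_nonneg_left htrBre (le_of_lt hlmin_pos)
    _ = ∑ i, lmin * (B i i).re := by rw [htrBre_sum, Finset.mul_sum]
    _ ≤ ∑ i, lam i * (B i i).re := by
        apply Finset.sum_le_sum
        intro i _
        exact mul_le_mul_of_nonneg_right (hlmin_le i) (hdiag i)
    _ = (Λ * B).trace.re := by
        rw [hΛB, Complex.re_sum]
        congr 1
        funext i
        rw [Complex.re_ofReal_mul]
end
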